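/- arXiv:2204.04684 — 4 statements merged into one kernel-verified Lean document; each statement's English description precedes it below -/
import Mathlib

section
/- Let $(r'_i)_{i\ge 1}$ be a sequence of nonnegative reals with $\sum_{i\ge 1} r'_i < 1$, and let $R' : \ell^1 \to \ell^1$ be the operator defined by $(R'x)_i = r'_i x_1 + x_{i+1}$. Then for every nonnegative $x \in \ell^1$, the $\ell^1$-norms $\|(R')^n x\|_1$ converge to $0$ as $n \to \infty$. -/
/-!
Write `yₙ = (R')ⁿ x` and `aₙ = yₙ 0`. One application of `R'` moves the mass `r'ᵢ aₙ` into
coordinate `i` and drops `aₙ` off the front, so `‖yₙ₊₁‖₁ = ‖yₙ‖₁ - (1 - ρ) aₙ` with `ρ = ∑ r'ᵢ`.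
By positivity the partial sums of `a` are bounded by `‖x‖₁ / (1 - ρ)`, so `a` is summable and
`‖yₙ‖₁` tends to `‖x‖₁ - (1 - ρ) ∑ aₙ`. Unrolling the recursion gives the renewal equation
`a = x + r' ⋆ a` (a shifted Cauchy product), whence `∑ aₙ = ‖x‖₁ + ρ ∑ aₙ` and the limit is `0`.
-/

open Finset

/-- The operator `R'` on sequences: `(R' x) i = r i * x 0 + x (i+1)`
(coordinates indexed from 0, so `x 0` plays the role of `x₁`:
first column `(r'_1, r'_2, …)ᵀ` and `1`'s on the superdiagonal). -/
def renewalOp (r : ℕ → ℝ) (x : ℕ → ℝ) : ℕ → ℝ := fun i => r i * x 0 + x (i + 1)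

theorem hasSum_sum_range_mul_sub_one_of_summable_norm {R : Type*} [NormedRing R] [CompleteSpace R]
    {f g : ℕ → R} (hf : Summable fun n => ‖f n‖) (hg : Summable fun n => ‖g n‖) :
    HasSum (fun n => ∑ k ∈ range n, f k * g (n - 1 - k)) ((∑' n, f n) * ∑' n, g n) := by
  rw [← hasSum_nat_add_iff' 1, tsum_mul_tsum_eq_tsum_sum_range_of_summable_norm hf hg]
  simpa using (summable_norm_sum_mul_range_of_summable_norm hf hg).of_norm.hasSum

section Renewal

variable {r x : ℕ → ℝ}

theorem iterate_renewalOp_succ_apply (n i : ℕ) :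
    (renewalOp r)^[n + 1] x i = r i * (renewalOp r)^[n] x 0 + (renewalOp r)^[n] x (i + 1) := by
  rw [Function.iterate_succ_apply']
  rfl

theorem iterate_renewalOp_nonneg (hr : ∀ i, 0 ≤ r i) (hx : ∀ i, 0 ≤ x i) (n i : ℕ) :
    0 ≤ (renewalOp r)^[n] x i := by
  induction n generalizing i with
  | zero => exact hx i
  | succ n ih =>
    rw [iterate_renewalOp_succ_apply]
    exact add_nonneg (mul_nonneg (hr i) (ih 0)) (ih (i + 1))

theorem summable_renewalOp (hr : Summable r) (hx : Summable x) : Summable (renewalOp r x) :=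
  (hr.mul_right (x 0)).add ((summable_nat_add_iff 1).mpr hx)

theorem tsum_renewalOp (hr : Summable r) (hx : Summable x) :
    ∑' i, renewalOp r x i = ∑' i, x i - (1 - ∑' i, r i) * x 0 := by
  rw [hx.tsum_eq_zero_add]
  change ∑' i, (r i * x 0 + x (i + 1)) = _
  rw [(hr.mul_right (x 0)).tsum_add ((summable_nat_add_iff 1).mpr hx), tsum_mul_right]
  ring

theorem summable_iterate_renewalOp (hr : Summable r) (hx : Summable x) (n : ℕ) :
    Summable ((renewalOp r)^[n] x) := by
  induction n with
  | zero => exact hx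
  | succ n ih =>
    rw [Function.iterate_succ_apply']
    exact summable_renewalOp hr ih

theorem tsum_iterate_renewalOp (hr : Summable r) (hx : Summable x) (n : ℕ) :
    ∑' i, (renewalOp r)^[n] x i =
      ∑' i, x i - (1 - ∑' i, r i) * ∑ k ∈ range n, (renewalOp r)^[k] x 0 := by
  induction n with
  | zero => simp
  | succ n ih =>
    rw [Function.iterate_succ_apply', tsum_renewalOp hr (summable_iterate_renewalOp hr hx n), ih,
      sum_range_succ]
    ring

theorem iterate_renewalOp_apply (n i : ℕ) :
    (renewalOp r)^[n] x i =
      x (n + i) + ∑ k ∈ range n, r (i + k) * (renewalOp r)^[n - 1 - k] x 0 := by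
  induction n generalizing i with
  | zero => simp
  | succ n ih =>
    rw [iterate_renewalOp_succ_apply, ih (i + 1), sum_range_succ']
    have hshift : ∀ k ∈ range n,
        r (i + (k + 1)) * (renewalOp r)^[n + 1 - 1 - (k + 1)] x 0 =
          r (i + 1 + k) * (renewalOp r)^[n - 1 - k] x 0 := fun k _ => by
      rw [show i + (k + 1) = i + 1 + k by omega, show n + 1 - 1 - (k + 1) = n - 1 - k by omega]
    rw [sum_congr rfl hshift, show n + (i + 1) = n + 1 + i by omega]
    simp only [add_zero, Nat.add_sub_cancel, Nat.sub_zero]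
    ring

theorem summable_iterate_renewalOp_apply_zero (hr : ∀ i, 0 ≤ r i) (hrs : Summable r)
    (hlt : ∑' i, r i < 1) (hx : ∀ i, 0 ≤ x i) (hxs : Summable x) :
    Summable fun n => (renewalOp r)^[n] x 0 := by
  refine summable_of_sum_range_le (c := (∑' i, x i) / (1 - ∑' i, r i))
    (fun n => iterate_renewalOp_nonneg hr hx n 0) fun n => ?_
  rw [le_div_iff₀ (sub_pos.mpr hlt)]
  have hnorm : 0 ≤ ∑' i, (renewalOp r)^[n] x i := tsum_nonneg (iterate_renewalOp_nonneg hr hx n)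
  rw [tsum_iterate_renewalOp hrs hxs n] at hnorm
  linarith

theorem mul_tsum_iterate_renewalOp_apply_zero (hr : Summable r)
    (ha : Summable fun n => (renewalOp r)^[n] x 0) :
    (1 - ∑' i, r i) * ∑' n, (renewalOp r)^[n] x 0 = ∑' i, x i := by
  have hr_norm : Summable fun n => ‖r n‖ := summable_norm_iff.mpr hr
  have ha_norm : Summable fun n => ‖(renewalOp r)^[n] x 0‖ := summable_norm_iff.mpr ha
  have hconv := hasSum_sum_range_mul_sub_one_of_summable_norm hr_norm ha_norm
  have hrenewal : ∀ n, x n = (renewalOp r)^[n] x 0 -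
      ∑ k ∈ range n, r k * (renewalOp r)^[n - 1 - k] x 0 := fun n => by
    rw [iterate_renewalOp_apply n 0]
    simp only [add_zero, zero_add, add_sub_cancel_right]
  rw [tsum_congr hrenewal, (ha.hasSum.sub hconv).tsum_eq]
  ring

end Renewal

/-- If `∑ r'_i < 1`, then `‖(R')^n x‖₁ → 0` for every nonnegative `x ∈ ℓ¹`. -/
theorem stmt0 (r : ℕ → ℝ) (hr : ∀ i, 0 ≤ r i) (hrs : Summable r)
    (hlt : (∑' i, r i) < 1)
    (x : ℕ → ℝ) (hx : ∀ i, 0 ≤ x i) (hxs : Summable x) :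
    Filter.Tendsto (fun n => ∑' i, |(renewalOp r)^[n] x i|)
      Filter.atTop (nhds 0) := by
  have ha := summable_iterate_renewalOp_apply_zero hr hrs hlt hx hxs
  have hnorm : ∀ n, ∑' i, |(renewalOp r)^[n] x i| =
      ∑' i, x i - (1 - ∑' i, r i) * ∑ k ∈ range n, (renewalOp r)^[k] x 0 := fun n => by
    simp_rw [abs_of_nonneg (iterate_renewalOp_nonneg hr hx n _)]
    exact tsum_iterate_renewalOp hrs hxs n
  simp_rw [hnorm]
  have hlim := (ha.hasSum.tendsto_sum_nat.const_mul (1 - ∑' i, r i)).const_sub (∑' i, x i)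
  rwa [mul_tsum_iterate_renewalOp_apply_zero hrs ha, sub_self] at hlim
end

section
/- Let $(r'_i)_{i\ge 1}$ be a sequence of nonnegative reals with $1 < \sum_{i\ge 1} r'_i < \infty$, and let $R' : \ell^1 \to \ell^1$ be defined by $(R'x)_i = r'_i x_1 + x_{i+1}$. Then for every nonnegative nonzero $x \in \ell^1$, $\|(R')^n x\|_1 \to \infty$ as $n \to \infty$. -/
open Finset Filter

theorem tsum_eq_of_renewal_equation {R : Type*} [NormedRing R] [CompleteSpace R]
    {r x a : ℕ → R} (hr : Summable fun i => ‖r i‖) (hx : Summable x)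
    (ha : Summable fun i => ‖a i‖) (ha₀ : a 0 = x 0)
    (ha_succ : ∀ n, a (n + 1) = x (n + 1) + ∑ p ∈ antidiagonal n, r p.1 * a p.2) :
    ∑' n, a n = ∑' n, x n + (∑' n, r n) * ∑' n, a n := by
  have hconv : Summable fun n => ∑ p ∈ antidiagonal n, r p.1 * a p.2 :=
    (summable_norm_sum_mul_antidiagonal_of_summable_norm hr ha).of_norm
  rw [tsum_mul_tsum_eq_tsum_sum_antidiagonal_of_summable_norm hr ha, ha.of_norm.tsum_eq_zero_add,
    hx.tsum_eq_zero_add, tsum_congr ha_succ, ((summable_nat_add_iff 1).2 hx).tsum_add hconv, ha₀,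
    add_assoc]

namespace renewalOp

variable {r x : ℕ → ℝ}

theorem iterate_nonneg (hr : ∀ i, 0 ≤ r i) (hx : ∀ i, 0 ≤ x i) (n i : ℕ) :
    0 ≤ (renewalOp r)^[n] x i := by
  induction n generalizing i with
  | zero => exact hx i
  | succ n ih =>
    rw [Function.iterate_succ_apply']
    exact add_nonneg (mul_nonneg (hr i) (ih 0)) (ih (i + 1))

theorem summable (hr : Summable r) (hx : Summable x) : Summable (renewalOp r x) :=
  (hr.mul_right _).add ((summable_nat_add_iff 1).2 hx)

theorem summable_iterate (hr : Summable r) (hx : Summable x) (n : ℕ) :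
    Summable ((renewalOp r)^[n] x) := by
  induction n with
  | zero => exact hx
  | succ n ih => exact Function.iterate_succ_apply' .. ▸ summable hr ih

theorem tsum_eq (hr : Summable r) (hx : Summable x) :
    ∑' i, renewalOp r x i = ∑' i, x i + (∑' i, r i - 1) * x 0 := by
  unfold renewalOp
  rw [(hr.mul_right _).tsum_add ((summable_nat_add_iff 1).2 hx), tsum_mul_right,
    hx.tsum_eq_zero_add]
  ring

theorem tsum_iterate_eq (hr : Summable r) (hx : Summable x) (n : ℕ) :
    ∑' i, (renewalOp r)^[n] x i
      = ∑' i, x i + (∑' i, r i - 1) * ∑ m ∈ range n, (renewalOp r)^[m] x 0 := by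
  induction n with
  | zero => simp
  | succ n ih =>
    rw [Function.iterate_succ_apply', tsum_eq hr (summable_iterate hr hx n), ih, sum_range_succ]
    ring

theorem iterate_succ_apply_eq (n i : ℕ) :
    (renewalOp r)^[n + 1] x i
      = x (i + (n + 1)) + ∑ p ∈ antidiagonal n, r (i + p.1) * (renewalOp r)^[p.2] x 0 := by
  induction n generalizing i with
  | zero => simp [renewalOp, add_comm]
  | succ n ih =>
    rw [Function.iterate_succ_apply', renewalOp, ih (i + 1), Nat.sum_antidiagonal_succ]
    simp only [add_zero, add_assoc, add_comm 1]
    ring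

theorem not_summable_iterate_apply_zero (hr : ∀ i, 0 ≤ r i) (hrs : Summable r)
    (hgt : 1 < ∑' i, r i) (hx : ∀ i, 0 ≤ x i) (hxs : Summable x) (hxne : x ≠ 0) :
    ¬ Summable fun n => (renewalOp r)^[n] x 0 := by
  intro ha
  have ha_nonneg : 0 ≤ ∑' n, (renewalOp r)^[n] x 0 := tsum_nonneg (iterate_nonneg hr hx · 0)
  obtain ⟨i, hi⟩ := Function.ne_iff.1 hxne
  have hx_pos : 0 < ∑' i, x i := hxs.tsum_pos hx i ((hx i).lt_of_ne' hi)
  have hrenewal := tsum_eq_of_renewal_equation (a := fun n => (renewalOp r)^[n] x 0)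
    hrs.abs hxs ha.abs rfl fun n => by simpa using iterate_succ_apply_eq (r := r) (x := x) n 0
  nlinarith

end renewalOp

/-- If `1 < ∑ r'_i < ∞`, then `‖(R')^n x‖₁ → ∞` for every nonnegative nonzero `x ∈ ℓ¹`. -/
theorem stmt1 (r : ℕ → ℝ) (hr : ∀ i, 0 ≤ r i) (hrs : Summable r)
    (hgt : 1 < ∑' i, r i)
    (x : ℕ → ℝ) (hx : ∀ i, 0 ≤ x i) (hxs : Summable x) (hxne : x ≠ 0) :
    Filter.Tendsto (fun n => ∑' i, |(renewalOp r)^[n] x i|)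
      Filter.atTop Filter.atTop := by
  have hnorm : ∀ n, ∑' i, |(renewalOp r)^[n] x i|
      = ∑' i, x i + (∑' i, r i - 1) * ∑ m ∈ range n, (renewalOp r)^[m] x 0 := fun n => by
    simp only [abs_of_nonneg (renewalOp.iterate_nonneg hr hx n _)]
    exact renewalOp.tsum_iterate_eq hrs hxs n
  have hpartial : Tendsto (fun n => ∑ m ∈ range n, (renewalOp r)^[m] x 0) atTop atTop :=
    (not_summable_iff_tendsto_nat_atTop_of_nonneg fun m => renewalOp.iterate_nonneg hr hx m 0).1
      (renewalOp.not_summable_iterate_apply_zero hr hrs hgt hx hxs hxne)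
  simp only [hnorm]
  exact tendsto_atTop_add_const_left _ _ (hpartial.const_mul_atTop (sub_pos.2 hgt))
end

section
/- Let $(r_n)_{n\ge 1}$ be nonnegative integers with $\sum_{n\ge 1} r_n \lambda^{-n} = 1$ for some $\lambda > 1$ and $S = \sum_{n\ge 1} n\lambda^{-n} r_n < \infty$. Define $w_n = S^{-1}\sum_{k \ge n} \lambda^{-k} r_k$ and $p_n = (S \lambda^n w_n)^{-1}$ for $n$ with $r_n > 0$. Then the entropy-type sum $-\sum_{n\ge 1}\bigl[(w_n - w_{n+1})\log\frac{\lambda^{-n}}{S w_n} + w_{n+1}\log w_{n+1} - w_{n+1}\log w_n\bigr]$ equals $\log \lambda$. -/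
/-- `w n = S⁻¹ ∑_{k ≥ n} λ⁻ᵏ r_k`. -/
noncomputable def wseq (lam S : ℝ) (r : ℕ → ℝ) (n : ℕ) : ℝ :=
  S⁻¹ * ∑' k : ℕ, lam⁻¹ ^ (n + k) * r (n + k)

/-!
Write `a n = λ⁻ⁿ r n`, so that `w n - w (n+1) = S⁻¹ a n`. Wherever `w (n+1) > 0` the logarithm
splits as `log (λ⁻⁽ⁿ⁺¹⁾ / (S w)) = -(n+1) log λ - log S - log w`, and the `n`-th term becomes
`-((n+1) log λ + log S) S⁻¹ a (n+1) + (w (n+2) log w (n+2) - w (n+1) log w (n+1))`; this also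
holds when `w (n+1) = 0`, since then `a (n+1) = w (n+2) = 0`. Summing, `∑ (n+1) a (n+1) = S` and `∑ a (n+1) = 1` contribute
`-log λ - S⁻¹ log S`, while the telescoping part tends to `-w 1 log w 1 = S⁻¹ log S` because
`w n → 0` and `x log x → 0` as `x → 0`.
-/

open Filter Topology Real

section Tails

variable {G : Type*} [AddCommGroup G] [TopologicalSpace G] [IsTopologicalAddGroup G]

theorem tsum_nat_add_eq_add_tsum_nat_add_succ [T2Space G] {f : ℕ → G} (hf : Summable f)
    (n : ℕ) : ∑' k, f (n + k) = f n + ∑' k, f (n + 1 + k) := by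
  have htail : Summable fun k => f (n + k) := by
    simpa only [add_comm] using (summable_nat_add_iff n).2 hf
  rw [htail.tsum_eq_zero_add, add_zero]
  simp only [add_assoc, add_comm 1]

theorem tendsto_tsum_nat_add_atTop [T2Space G] (f : ℕ → G) :
    Tendsto (fun n => ∑' k, f (n + k)) atTop (𝓝 0) := by
  simpa only [add_comm] using tendsto_sum_nat_add f

theorem hasSum_nat_add_one_of_eq_zero {f : ℕ → G} {a : G} (hf : HasSum f a) (h0 : f 0 = 0) :
    HasSum (fun n => f (n + 1)) a := by
  simpa [h0] using (hasSum_nat_add_iff' 1).2 hf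

theorem hasSum_sub_of_tendsto [T2Space G] {g : ℕ → G} {l : G}
    (hs : Summable fun n => g (n + 1) - g n) (hg : Tendsto g atTop (𝓝 l)) :
    HasSum (fun n => g (n + 1) - g n) (l - g 0) := by
  have hpartial : Tendsto (fun N => ∑ n ∈ Finset.range N, (g (n + 1) - g n)) atTop
      (𝓝 (l - g 0)) := by
    simpa only [Finset.sum_range_sub] using hg.sub_const (g 0)
  convert hs.hasSum
  exact tendsto_nhds_unique hpartial hs.hasSum.tendsto_sum_nat

end Tails

theorem tsum_le_tsum_nat_mul {a : ℕ → ℝ} (ha : ∀ n, 0 ≤ a n) (ha0 : a 0 = 0) (hs : Summable a)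
    (hs' : Summable fun n => n * a n) : ∑' n, a n ≤ ∑' n, n * a n := by
  refine hs.tsum_le_tsum (fun n => ?_) hs'
  rcases n.eq_zero_or_pos with rfl | hn
  · simp [ha0]
  · exact le_mul_of_one_le_left (ha n) (by exact_mod_cast hn)

theorem entropy_term_eq {lam S x y : ℝ} (m : ℕ) (hlam : lam ≠ 0) (hS : S ≠ 0) (hy : 0 ≤ y)
    (hyx : y ≤ x) :
    (x - y) * log (lam⁻¹ ^ m / (S * x)) + y * log y - y * log x
      = -(m * log lam + log S) * (x - y) + (y * log y - x * log x) := by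
  rcases hyx.lt_or_eq with hlt | rfl
  · have hx : x ≠ 0 := (hy.trans_lt hlt).ne'
    rw [log_div (by positivity) (mul_ne_zero hS hx), log_mul hS hx, log_pow, log_inv]
    ring
  · ring

section Renewal

variable {lam S : ℝ} {r : ℕ → ℝ}

noncomputable def renewalEntropyTerm (lam S : ℝ) (r : ℕ → ℝ) (n : ℕ) : ℝ :=
  (wseq lam S r (n + 1) - wseq lam S r (n + 2)) *
      log (lam⁻¹ ^ (n + 1) / (S * wseq lam S r (n + 1)))
    + wseq lam S r (n + 2) * log (wseq lam S r (n + 2))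
    - wseq lam S r (n + 2) * log (wseq lam S r (n + 1))

theorem wseq_eq_add_wseq_succ (hsum : Summable fun n => lam⁻¹ ^ n * r n) (n : ℕ) :
    wseq lam S r n = S⁻¹ * (lam⁻¹ ^ n * r n) + wseq lam S r (n + 1) := by
  rw [wseq, wseq, tsum_nat_add_eq_add_tsum_nat_add_succ hsum n, mul_add]

theorem wseq_nonneg (hlam : 0 < lam) (hr : ∀ n, 0 ≤ r n) (hS : 0 ≤ S) (n : ℕ) :
    0 ≤ wseq lam S r n :=
  mul_nonneg (inv_nonneg.2 hS) (tsum_nonneg fun k => mul_nonneg (by positivity) (hr _))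

theorem tendsto_wseq_atTop : Tendsto (wseq lam S r) atTop (𝓝 0) := by
  have h := (tendsto_tsum_nat_add_atTop fun k => lam⁻¹ ^ k * r k).const_mul S⁻¹
  rwa [mul_zero] at h

theorem wseq_one (hsum : Summable fun n => lam⁻¹ ^ n * r n) (hr0 : r 0 = 0)
    (h1 : ∑' n, lam⁻¹ ^ n * r n = 1) : wseq lam S r 1 = S⁻¹ := by
  have h0 : wseq lam S r 0 = S⁻¹ := by simp only [wseq, zero_add, h1, mul_one]
  simpa [hr0] using (wseq_eq_add_wseq_succ (S := S) hsum 0).symm.trans h0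

theorem renewalEntropyTerm_eq (hlam : 0 < lam) (hr : ∀ n, 0 ≤ r n) (hS : 0 < S)
    (hsum : Summable fun n => lam⁻¹ ^ n * r n) (n : ℕ) :
    renewalEntropyTerm lam S r n
      = -log lam * ((n + 1) * (S⁻¹ * (lam⁻¹ ^ (n + 1) * r (n + 1))))
        + -log S * (S⁻¹ * (lam⁻¹ ^ (n + 1) * r (n + 1)))
        + (wseq lam S r (n + 2) * log (wseq lam S r (n + 2))
          - wseq lam S r (n + 1) * log (wseq lam S r (n + 1))) := by
  have hstep : wseq lam S r (n + 1) - wseq lam S r (n + 2)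
      = S⁻¹ * (lam⁻¹ ^ (n + 1) * r (n + 1)) := by
    rw [wseq_eq_add_wseq_succ hsum (n + 1)]
    ring
  have hmass_nonneg : 0 ≤ S⁻¹ * (lam⁻¹ ^ (n + 1) * r (n + 1)) := by
    have := hr (n + 1)
    positivity
  rw [renewalEntropyTerm,
    entropy_term_eq (n + 1) hlam.ne' hS.ne' (wseq_nonneg hlam hr hS.le (n + 2)) (by linarith),
    hstep]
  push_cast
  ring

theorem hasSum_cast_succ_mul_inv_mul (hS0 : S ≠ 0)
    (hS : Summable fun n : ℕ => (n : ℝ) * lam⁻¹ ^ n * r n)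
    (hSdef : S = ∑' n : ℕ, (n : ℝ) * lam⁻¹ ^ n * r n) :
    HasSum (fun n : ℕ => ((n : ℝ) + 1) * (S⁻¹ * (lam⁻¹ ^ (n + 1) * r (n + 1)))) 1 := by
  have h := hS.hasSum.mul_left S⁻¹
  rw [← hSdef, inv_mul_cancel₀ hS0] at h
  refine (hasSum_nat_add_one_of_eq_zero h (by simp)).congr_fun fun n => ?_
  push_cast
  ring

theorem hasSum_inv_mul_succ (hsum : Summable fun n => lam⁻¹ ^ n * r n) (hr0 : r 0 = 0)
    (h1 : ∑' n, lam⁻¹ ^ n * r n = 1) :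
    HasSum (fun n : ℕ => S⁻¹ * (lam⁻¹ ^ (n + 1) * r (n + 1))) S⁻¹ := by
  have h := hsum.hasSum.mul_left S⁻¹
  rw [h1, mul_one] at h
  exact hasSum_nat_add_one_of_eq_zero h (by simp [hr0])

theorem hasSum_renewalEntropyTerm (hlam : 0 < lam) (hr : ∀ n, 0 ≤ r n) (hr0 : r 0 = 0)
    (hsum : Summable fun n => lam⁻¹ ^ n * r n) (h1 : ∑' n, lam⁻¹ ^ n * r n = 1)
    (hS : Summable fun n : ℕ => (n : ℝ) * lam⁻¹ ^ n * r n)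
    (hSdef : S = ∑' n : ℕ, (n : ℝ) * lam⁻¹ ^ n * r n)
    (hent : Summable (renewalEntropyTerm lam S r)) :
    HasSum (renewalEntropyTerm lam S r) (-log lam) := by
  have hS1 : 1 ≤ S := by
    rw [hSdef, ← h1]
    simpa only [mul_assoc] using
      tsum_le_tsum_nat_mul (fun n => mul_nonneg (by positivity) (hr n)) (by simp [hr0]) hsum
        (by simpa only [mul_assoc] using hS)
  have hS0 : 0 < S := by linarith
  have hmean := hasSum_cast_succ_mul_inv_mul hS0.ne' hS hSdef
  have hmass := hasSum_inv_mul_succ (S := S) hsum hr0 h1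
  set g : ℕ → ℝ := fun n => wseq lam S r (n + 1) * log (wseq lam S r (n + 1))
  have hterm : ∀ n : ℕ, renewalEntropyTerm lam S r n
      = -log lam * ((n + 1) * (S⁻¹ * (lam⁻¹ ^ (n + 1) * r (n + 1))))
        + -log S * (S⁻¹ * (lam⁻¹ ^ (n + 1) * r (n + 1))) + (g (n + 1) - g n) :=
    renewalEntropyTerm_eq hlam hr hS0 hsum
  have hw : Tendsto (fun n => wseq lam S r (n + 1)) atTop (𝓝 0) :=
    tendsto_wseq_atTop.comp (tendsto_add_atTop_nat 1)
  have hg : Tendsto g atTop (𝓝 0) := by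
    have h := (continuous_mul_log.tendsto 0).comp hw
    rwa [zero_mul] at h
  have htele : HasSum (fun n => g (n + 1) - g n) (0 - g 0) := by
    refine hasSum_sub_of_tendsto ?_ hg
    refine ((hent.sub (hmean.mul_left (-log lam)).summable).sub
      (hmass.mul_left (-log S)).summable).congr fun n => ?_
    rw [hterm]
    ring
  have htotal := ((hmean.mul_left (-log lam)).add (hmass.mul_left (-log S))).add htele
  rw [show -log lam * 1 + -log S * S⁻¹ + (0 - g 0) = -log lam by
    simp only [g, zero_add, wseq_one hsum hr0 h1, log_inv]
    ring] at htotal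
  exact htotal.congr_fun hterm

end Renewal

/-- The entropy computation for the Markov measure on the renewal shift:
`-∑_{n≥1} [(w_n - w_{n+1}) log(λ⁻ⁿ/(S w_n)) + w_{n+1} log w_{n+1} - w_{n+1} log w_n]
  = log λ`. -/
theorem stmt5 (r : ℕ → ℕ) (lam S : ℝ) (hr0 : r 0 = 0) (hlam : 1 < lam)
    (hsum : Summable (fun n : ℕ => lam⁻¹ ^ n * (r n : ℝ)))
    (h1 : ∑' n : ℕ, (r n : ℝ) * lam⁻¹ ^ n = 1)
    (hS : Summable (fun n : ℕ => (n : ℝ) * lam⁻¹ ^ n * (r n : ℝ)))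
    (hSdef : S = ∑' n : ℕ, (n : ℝ) * lam⁻¹ ^ n * (r n : ℝ))
    (hent : Summable (fun n : ℕ =>
      (wseq lam S (fun k => (r k : ℝ)) (n + 1) - wseq lam S (fun k => (r k : ℝ)) (n + 2)) *
          Real.log (lam⁻¹ ^ (n + 1) / (S * wseq lam S (fun k => (r k : ℝ)) (n + 1)))
        + wseq lam S (fun k => (r k : ℝ)) (n + 2) *
            Real.log (wseq lam S (fun k => (r k : ℝ)) (n + 2))
        - wseq lam S (fun k => (r k : ℝ)) (n + 2) *
            Real.log (wseq lam S (fun k => (r k : ℝ)) (n + 1)))) :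
    -(∑' n : ℕ,
      ((wseq lam S (fun k => (r k : ℝ)) (n + 1) - wseq lam S (fun k => (r k : ℝ)) (n + 2)) *
          Real.log (lam⁻¹ ^ (n + 1) / (S * wseq lam S (fun k => (r k : ℝ)) (n + 1)))
        + wseq lam S (fun k => (r k : ℝ)) (n + 2) *
            Real.log (wseq lam S (fun k => (r k : ℝ)) (n + 2))
        - wseq lam S (fun k => (r k : ℝ)) (n + 2) *
            Real.log (wseq lam S (fun k => (r k : ℝ)) (n + 1))))
      = Real.log lam := by
  have h1' : ∑' n : ℕ, lam⁻¹ ^ n * (r n : ℝ) = 1 := by simpa only [mul_comm] using h1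
  have h := hasSum_renewalEntropyTerm (by linarith) (fun n => Nat.cast_nonneg (r n))
    (by simp [hr0]) hsum h1' hS hSdef hent
  exact neg_eq_iff_eq_neg.2 h.tsum_eq
end

section
/- Let $(r_n)_{n\ge 1}$ be nonnegative integers and $a_n = \sum_{k\ge 1}\sum_{n_1+\cdots+n_k=n} r_{n_1}\cdots r_{n_k}$ (with $a_0 = 1$) the associated renewal sequence. Suppose there exist $h > 0$ and $C \ge 1$ such that $C^{-1}e^{hn} \le a_n \le Ce^{hn}$ for all sufficiently large $n$. Then $\sum_{n\ge 1} r_n e^{-hn} = 1$. -/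
/-!
Conjugating by `e^{-hn}`, the sequence `b_n = e^{-hn} a_n` is the renewal sequence of the part
weights `x_a = r_a e^{-ha}`, and the hypothesis says `C⁻¹ ≤ b_n ≤ C` for large `n`. Let
`s = ∑ x_a`. Summing `b_n` over all `n` sums the weights of all compositions, i.e. `∑_k s^k`;
if `s < 1` this is finite, so `b_n → 0`. If `s > 1`, some truncation `q = ∑_{a < m} x_a` exceeds
`1`, and a composition into `k` parts below `m` has total in `[k, km]`, so
`q^k ≤ ∑_{k ≤ n ≤ km} b_n ≤ kmC`, which exponential growth forbids.
-/

open scoped ENNReal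

/-- The renewal sequence `a_n = ∑_{k ≥ 1} ∑_{n₁ + ⋯ + n_k = n} r_{n₁} ⋯ r_{n_k}`
(ordered compositions of `n` into positive parts; `a₀ = 1` via the empty list). -/
noncomputable def renewalCount (r : ℕ → ℕ) (n : ℕ) : ℝ :=
  ∑' l : List ℕ,
    if l.sum = n ∧ 0 ∉ l then (l.map (fun m => (r m : ℝ))).prod else 0

open Filter Asymptotics

section ListProducts

variable {α : Type*} (f : α → ℝ≥0∞)

theorem ENNReal.tsum_ite_length_prod_map_eq_pow (k : ℕ) :
    ∑' l : List α, (if l.length = k then (l.map f).prod else 0) = (∑' a, f a) ^ k := by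
  induction k with
  | zero => simp [List.length_eq_zero_iff, tsum_ite_eq]
  | succ k ih =>
    have hcons : Function.Injective (fun p : α × List α => p.1 :: p.2) :=
      fun p q hpq => Prod.ext (List.cons.inj hpq).1 (List.cons.inj hpq).2
    have hsupp :
        Function.support (fun l : List α => if l.length = k + 1 then (l.map f).prod else 0) ⊆
          Set.range (fun p : α × List α => p.1 :: p.2) := by
      rintro (_ | ⟨a, l⟩) hl
      · simp at hl
      · exact ⟨(a, l), rfl⟩
    rw [← hcons.tsum_eq hsupp, ENNReal.tsum_prod', pow_succ', ← ih, ← ENNReal.tsum_mul_right]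
    refine tsum_congr fun a => ?_
    rw [← ENNReal.tsum_mul_left]
    refine tsum_congr fun l => ?_
    simp only [List.length_cons, Nat.add_right_cancel_iff, List.map_cons, List.prod_cons, mul_ite,
      mul_zero]

theorem ENNReal.tsum_tsum_ite_eq {β γ : Type*} [DecidableEq γ] (g : β → ℝ≥0∞) (φ : β → γ) :
    ∑' c, ∑' b, (if φ b = c then g b else 0) = ∑' b, g b := by
  rw [ENNReal.tsum_comm]
  exact tsum_congr fun b => by simp [eq_comm, tsum_ite_eq]

theorem ENNReal.tsum_prod_map_eq_tsum_pow :
    ∑' l : List α, (l.map f).prod = ∑' k : ℕ, (∑' a, f a) ^ k := by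
  simp_rw [← ENNReal.tsum_ite_length_prod_map_eq_pow]
  exact (ENNReal.tsum_tsum_ite_eq _ List.length).symm

end ListProducts

theorem ENNReal.eventually_natCast_mul_lt_pow {q a : ℝ≥0∞} (hq : 1 < q) (ha : a ≠ ⊤) :
    ∀ᶠ k : ℕ in atTop, k * a < q ^ k := by
  rcases eq_or_ne q ⊤ with rfl | hq_top
  · filter_upwards [eventually_ge_atTop 1] with k hk
    rw [ENNReal.top_pow (by omega)]
    exact ENNReal.mul_lt_top (ENNReal.natCast_lt_top k) ha.lt_top
  lift q to NNReal using hq_top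
  lift a to NNReal using ha
  have hq' : 1 < (q : ℝ) := by exact_mod_cast hq
  have hlin : (fun k : ℕ => (a : ℝ) * k) =o[atTop] fun k => (q : ℝ) ^ k :=
    (isLittleO_coe_const_pow_of_one_lt hq').const_mul_left _
  filter_upwards [hlin.def one_half_pos] with k hk
  have hpos : 0 < (q : ℝ) ^ k := pow_pos (by linarith) k
  rw [Real.norm_of_nonneg (by positivity), Real.norm_of_nonneg hpos.le] at hk
  have : (k : ℝ) * a < (q : ℝ) ^ k := by linarith
  exact_mod_cast this

section Renewal

variable (r : ℕ → ℕ) (h : ℝ)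

-- Parts equal to `0` get weight `0`, so compositions with a zero part drop out of every sum.
noncomputable def partWeight (a : ℕ) : ℝ≥0∞ :=
  if a = 0 then 0 else r a * ENNReal.ofReal (Real.exp (-h * a))

noncomputable def scaledRenewal (n : ℕ) : ℝ≥0∞ :=
  ∑' l : List ℕ, if l.sum = n then (l.map (partWeight r h)).prod else 0

theorem prod_map_partWeight (l : List ℕ) :
    (l.map (partWeight r h)).prod =
      (if 0 ∈ l then 0 else ((l.map r).prod : ℝ≥0∞)) * ENNReal.ofReal (Real.exp (-h * l.sum)) := by
  induction l with
  | nil => simp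
  | cons a l ih =>
    rcases eq_or_ne a 0 with rfl | ha
    · simp [partWeight]
    rw [List.map_cons, List.prod_cons, ih, partWeight, if_neg ha, List.sum_cons, Nat.cast_add,
      mul_add, Real.exp_add, ENNReal.ofReal_mul (Real.exp_nonneg _)]
    by_cases h0 : 0 ∈ l
    · simp [h0]
    · simp only [List.mem_cons, ha.symm, h0, or_self, if_false, List.map_cons, List.prod_cons,
        Nat.cast_mul]
      ring

theorem toReal_scaledRenewal (n : ℕ) :
    (scaledRenewal r h n).toReal = renewalCount r n * Real.exp (-h * n) := by
  have hterm : ∀ l : List ℕ, (if l.sum = n then (l.map (partWeight r h)).prod else 0) =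
      (if l.sum = n ∧ 0 ∉ l then ((l.map r).prod : ℝ≥0∞) else 0) *
        ENNReal.ofReal (Real.exp (-h * n)) := by
    intro l
    rw [prod_map_partWeight]
    by_cases hl : l.sum = n <;> by_cases h0 : 0 ∈ l <;> simp [hl, h0]
  rw [scaledRenewal, tsum_congr hterm, ENNReal.tsum_mul_right, ENNReal.toReal_mul,
    ENNReal.toReal_ofReal (Real.exp_nonneg _), renewalCount,
    ENNReal.tsum_toReal_eq fun l => by
      split_ifs
      exacts [ENNReal.natCast_ne_top _, ENNReal.zero_ne_top]]
  congr 1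
  refine tsum_congr fun l => ?_
  split_ifs
  · rw [ENNReal.toReal_natCast, Nat.cast_list_prod, List.map_map]
    rfl
  · rfl

theorem scaledRenewal_bounds {C : ℝ} (hC : 0 < C) {n : ℕ}
    (hn : C⁻¹ * Real.exp (h * n) ≤ renewalCount r n ∧ renewalCount r n ≤ C * Real.exp (h * n)) :
    ENNReal.ofReal C⁻¹ ≤ scaledRenewal r h n ∧ scaledRenewal r h n ≤ ENNReal.ofReal C := by
  have hexp : Real.exp (h * n) * Real.exp (-h * n) = 1 := by
    rw [← Real.exp_add, neg_mul, add_neg_cancel, Real.exp_zero]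
  have hlo : C⁻¹ ≤ (scaledRenewal r h n).toReal := by
    rw [toReal_scaledRenewal]
    calc C⁻¹ = C⁻¹ * Real.exp (h * n) * Real.exp (-h * n) := by rw [mul_assoc, hexp, mul_one]
      _ ≤ _ := by gcongr; exact hn.1
  have hhi : (scaledRenewal r h n).toReal ≤ C := by
    rw [toReal_scaledRenewal]
    calc _ ≤ C * Real.exp (h * n) * Real.exp (-h * n) := by gcongr; exact hn.2
      _ = C := by rw [mul_assoc, hexp, mul_one]
  have hfin : scaledRenewal r h n ≠ ⊤ := by
    intro htop
    rw [htop, ENNReal.toReal_top] at hlo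
    exact (inv_pos.2 hC).not_ge hlo
  exact ⟨ENNReal.ofReal_le_of_le_toReal hlo, (ENNReal.le_ofReal_iff_toReal_le hfin hC.le).2 hhi⟩

theorem tsum_scaledRenewal :
    ∑' n, scaledRenewal r h n = ∑' k : ℕ, (∑' a, partWeight r h a) ^ k := by
  rw [← ENNReal.tsum_prod_map_eq_tsum_pow]
  exact ENNReal.tsum_tsum_ite_eq _ List.sum

theorem sum_scaledRenewal (s : Finset ℕ) :
    ∑ n ∈ s, scaledRenewal r h n =
      ∑' l : List ℕ, if l.sum ∈ s then (l.map (partWeight r h)).prod else 0 := by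
  simp only [scaledRenewal]
  rw [← Summable.tsum_finsetSum (fun _ _ => ENNReal.summable)]
  exact tsum_congr fun l => Finset.sum_ite_eq s l.sum _

theorem pow_le_sum_scaledRenewal (m k : ℕ) :
    (∑ a ∈ Finset.range m, partWeight r h a) ^ k ≤
      ∑ n ∈ Finset.Icc k (k * m), scaledRenewal r h n := by
  set f := (Finset.range m : Set ℕ).indicator (partWeight r h)
  have hf : ∑' a, f a = ∑ a ∈ Finset.range m, partWeight r h a :=
    (sum_eq_tsum_indicator _ _).symm
  rw [← hf, ← ENNReal.tsum_ite_length_prod_map_eq_pow, sum_scaledRenewal]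
  refine ENNReal.tsum_le_tsum fun l => ?_
  split_ifs with hlen hsum
  · exact List.prod_le_prod' fun a _ => Set.indicator_le_self _ _ a
  · refine (List.prod_eq_zero_iff.2 ?_).le
    by_contra hne
    have hparts : ∀ a ∈ l, 1 ≤ a ∧ a ≤ m := by
      intro a ha
      have hfa : f a ≠ 0 := fun h0 => hne (List.mem_map.2 ⟨a, ha, h0⟩)
      have hmem : a ∈ Finset.range m := by
        by_contra hnot
        exact hfa (Set.indicator_of_notMem hnot _)
      have ha0 : a ≠ 0 := by
        rintro rfl
        exact hfa (by simp [f, partWeight])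
      exact ⟨Nat.one_le_iff_ne_zero.2 ha0, (Finset.mem_range.1 hmem).le⟩
    refine hsum (Finset.mem_Icc.2 ⟨?_, ?_⟩)
    · exact hlen ▸ List.length_le_sum_of_one_le l fun a ha => (hparts a ha).1
    · simpa [hlen] using List.sum_le_card_nsmul l m fun a ha => (hparts a ha).2
  · exact zero_le
  · exact le_rfl

theorem one_le_tsum_partWeight {c : ℝ≥0∞} (hc : c ≠ 0) {n0 : ℕ}
    (hlo : ∀ n, n0 ≤ n → c ≤ scaledRenewal r h n) : 1 ≤ ∑' a, partWeight r h a := by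
  by_contra! hs
  have hfin : ∑' n, scaledRenewal r h n ≠ ⊤ := by
    rw [tsum_scaledRenewal, ENNReal.tsum_geometric]
    exact ENNReal.inv_ne_top.2 (tsub_pos_of_lt hs).ne'
  obtain ⟨n, hlt, hn⟩ := (((ENNReal.tendsto_atTop_zero_of_tsum_ne_top hfin).eventually
    (gt_mem_nhds (pos_iff_ne_zero.2 hc))).and (eventually_ge_atTop n0)).exists
  exact (hlo n hn).not_gt hlt

theorem tsum_partWeight_le_one {c : ℝ≥0∞} (hc : c ≠ ⊤) {n0 : ℕ}
    (hhi : ∀ n, n0 ≤ n → scaledRenewal r h n ≤ c) : ∑' a, partWeight r h a ≤ 1 := by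
  by_contra! hs
  obtain ⟨m, hm⟩ := ((ENNReal.tendsto_nat_tsum _).eventually (lt_mem_nhds hs)).exists
  have hgrowth : ∀ k, n0 ≤ k → 1 ≤ k →
      (∑ a ∈ Finset.range m, partWeight r h a) ^ k ≤ k * (m * c) := by
    intro k hk0 hk1
    calc _ ≤ ∑ n ∈ Finset.Icc k (k * m), scaledRenewal r h n := pow_le_sum_scaledRenewal r h m k
      _ ≤ ∑ _n ∈ Finset.Icc k (k * m), c :=
        Finset.sum_le_sum fun n hn => hhi n (hk0.trans (Finset.mem_Icc.1 hn).1)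
      _ = (k * m + 1 - k : ℕ) * c := by rw [Finset.sum_const, nsmul_eq_mul, Nat.card_Icc]
      _ ≤ k * (m * c) := by
        rw [← mul_assoc]
        gcongr
        exact_mod_cast (by omega : k * m + 1 - k ≤ k * m)
  obtain ⟨k, hlt, hk0, hk1⟩ := ((ENNReal.eventually_natCast_mul_lt_pow hm
    (ENNReal.mul_ne_top (ENNReal.natCast_ne_top m) hc)).and
      ((eventually_ge_atTop n0).and (eventually_ge_atTop 1))).exists
  exact (hgrowth k hk0 hk1).not_gt hlt

theorem tsum_partWeight :
    ∑' a, partWeight r h a =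
      ∑' n : ℕ, (r (n + 1) : ℝ≥0∞) * ENNReal.ofReal (Real.exp (-h * ((n : ℝ) + 1))) := by
  rw [tsum_eq_zero_add' ENNReal.summable]
  simp [partWeight]

end Renewal

theorem stmt16_general (r : ℕ → ℕ) (h : ℝ) (C : ℝ) (hC : 1 ≤ C) (n0 : ℕ)
    (hbound : ∀ n : ℕ, n0 ≤ n →
      C⁻¹ * Real.exp (h * (n : ℝ)) ≤ renewalCount r n
        ∧ renewalCount r n ≤ C * Real.exp (h * (n : ℝ))) :
    ∑' n : ℕ, (r (n + 1) : ℝ≥0∞) *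
        ENNReal.ofReal (Real.exp (-h * ((n : ℝ) + 1))) = 1 := by
  have hC0 : 0 < C := by linarith
  have hscaled n (hn : n0 ≤ n) := scaledRenewal_bounds r h hC0 (hbound n hn)
  rw [← tsum_partWeight]
  exact le_antisymm (tsum_partWeight_le_one r h ENNReal.ofReal_ne_top fun n hn => (hscaled n hn).2)
    (one_le_tsum_partWeight r h (ENNReal.ofReal_pos.2 (inv_pos.2 hC0)).ne' fun n hn =>
      (hscaled n hn).1)

/-- Kesten-type renewal dichotomy: if `C⁻¹ e^{hn} ≤ a_n ≤ C e^{hn}` for all large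
`n`, then `∑_{n ≥ 1} r_n e^{-hn} = 1` (sum taken in `[0,∞]`). -/
theorem stmt16 (r : ℕ → ℕ) (h : ℝ) (hh : 0 < h) (C : ℝ) (hC : 1 ≤ C) (n0 : ℕ)
    (hbound : ∀ n : ℕ, n0 ≤ n →
      C⁻¹ * Real.exp (h * (n : ℝ)) ≤ renewalCount r n
        ∧ renewalCount r n ≤ C * Real.exp (h * (n : ℝ))) :
    ∑' n : ℕ, (r (n + 1) : ℝ≥0∞) *
        ENNReal.ofReal (Real.exp (-h * ((n : ℝ) + 1))) = 1 :=
  stmt16_general r h C hC n0 hbound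
end
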